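/- arXiv:1710.05490 — 5 statements merged into one kernel-verified Lean document; each statement's English description precedes it below -/
import Mathlib

section
/- Let S be a finite set, T : S^3 → (probability distributions on S) a transition kernel with T(a,b,c;d) > 0 for all a,b,c,d, and p a strictly positive probability vector on S. Then the following are equivalent: (i) for all a,c,d ∈ S, p(d) = ∑_{b ∈ S} p(b) T(a,b,c;d); (ii) for every k ≥ 1 and every choice of y_0,…,y_k, z_0,…,z_{k-1} ∈ S, ∑_{x_0,…,x_{k-1} ∈ S} ∏_{i=0}^{k-1} p(x_i) ∏_{i=0}^{k} p(y_i) ∏_{i=0}^{k-1} T(y_i, x_i, y_{i+1}; z_i) = ∏_{i=0}^{k} p(y_i) ∏_{i=0}^{k-1} p(z_i). -/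
/-- Characterization of invariance of the horizontal zigzag product
measure `π_p` for a PCA with memory two (Theorem 1 of the paper):
Condition 1 is equivalent to the propagation identity for all finite
windows. -/
theorem hzpm_invariant_iff
    {S : Type*} [Fintype S] [DecidableEq S]
    (T : S → S → S → S → ℝ)
    (hTpos : ∀ a b c d, 0 < T a b c d)
    (hTsum : ∀ a b c, ∑ d, T a b c d = 1)
    (p : S → ℝ) (hp : ∀ b, 0 < p b) (hpsum : ∑ b, p b = 1) :
    (∀ a c d, p d = ∑ b, p b * T a b c d) ↔
    (∀ k : ℕ, 1 ≤ k → ∀ (y : Fin (k + 1) → S) (z : Fin k → S),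
      ∑ x : Fin k → S,
        (∏ i, p (x i)) * (∏ i, p (y i)) *
          ∏ i : Fin k, T (y i.castSucc) (x i) (y i.succ) (z i)
      = (∏ i, p (y i)) * ∏ i, p (z i)) := by
  constructor
  · intro h k _ y z
    have key : ∑ x : Fin k → S,
        (∏ i, p (x i)) * ∏ i : Fin k, T (y i.castSucc) (x i) (y i.succ) (z i)
        = ∏ i, p (z i) := by
      have h1 : ∏ i : Fin k, (∑ b, p b * T (y i.castSucc) b (y i.succ) (z i))
          = ∑ x ∈ Fintype.piFinset (fun _ : Fin k => (Finset.univ : Finset S)),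
              ∏ i, p (x i) * T (y i.castSucc) (x i) (y i.succ) (z i) :=
        Finset.prod_univ_sum _ _
      rw [Fintype.piFinset_univ] at h1
      calc ∑ x : Fin k → S,
            (∏ i, p (x i)) * ∏ i : Fin k, T (y i.castSucc) (x i) (y i.succ) (z i)
          = ∑ x : Fin k → S, ∏ i, p (x i) * T (y i.castSucc) (x i) (y i.succ) (z i) := by
            refine Finset.sum_congr rfl fun x _ => ?_
            rw [Finset.prod_mul_distrib]
        _ = ∏ i : Fin k, (∑ b, p b * T (y i.castSucc) b (y i.succ) (z i)) := h1.symm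
        _ = ∏ i, p (z i) := by
            refine Finset.prod_congr rfl fun i _ => ?_
            exact (h _ _ _).symm
    calc ∑ x : Fin k → S,
          (∏ i, p (x i)) * (∏ i, p (y i)) *
            ∏ i : Fin k, T (y i.castSucc) (x i) (y i.succ) (z i)
        = (∏ i, p (y i)) * ∑ x : Fin k → S,
            (∏ i, p (x i)) * ∏ i : Fin k, T (y i.castSucc) (x i) (y i.succ) (z i) := by
          rw [Finset.mul_sum]; exact Finset.sum_congr rfl fun x _ => by ring
      _ = (∏ i, p (y i)) * ∏ i, p (z i) := by rw [key]
  · intro h a c d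
    have h1 := h 1 le_rfl ![a, c] ![d]
    have h2 : ∑ x : Fin 1 → S,
        (∏ i, p (x i)) * (∏ i, p (![a, c] i)) *
          ∏ i : Fin 1, T (![a, c] i.castSucc) (x i) (![a, c] i.succ) (![d] i)
        = ∑ b : S, p b * (p a * p c) * T a b c d := by
      rw [← ((Equiv.funUnique (Fin 1) S).symm.sum_comp _)]
      refine Finset.sum_congr rfl fun b _ => ?_
      simp [Fin.prod_univ_one, Fin.prod_univ_two]
    rw [h2] at h1
    have hprod : (∏ i, p (![a, c] i)) = p a * p c := by
      simp [Fin.prod_univ_succ]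
    rw [hprod] at h1
    simp only [Fin.prod_univ_one, Matrix.cons_val_zero] at h1
    have hac : (0:ℝ) < p a * p c := mul_pos (hp a) (hp c)
    have key : (p a * p c) * ∑ b, p b * T a b c d = (p a * p c) * p d := by
      rw [Finset.mul_sum, ← h1]
      exact Finset.sum_congr rfl fun b _ => by ring
    have := mul_left_cancel₀ hac.ne' key
    linarith
end

section
/- Let S be a finite set, p a strictly positive probability vector, and T a positive transition kernel satisfying, for all a,b,c,d ∈ S, the relation p(a) T(a,b,c;d) = p(d) T(b,c,d;a). Then T automatically satisfies Condition 2: for all a,b,d ∈ S, ∑_{c ∈ S} p(c) T(a,b,c;d) = p(d). -/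
/-- The `⟨r⟩`-reversibility relation `p(a)T(a,b,c;d) = p(d)T(b,c,d;a)`
implies Condition 2: `∑_c p(c) T(a,b,c;d) = p(d)`. -/
theorem r_reversible_implies_cond2
    {S : Type*} [Fintype S] [DecidableEq S]
    (T : S → S → S → S → ℝ)
    (hTpos : ∀ a b c d, 0 < T a b c d)
    (hTsum : ∀ a b c, ∑ d, T a b c d = 1)
    (p : S → ℝ) (hp : ∀ b, 0 < p b) (hpsum : ∑ b, p b = 1)
    (hrot : ∀ a b c d, p a * T a b c d = p d * T b c d a) :
    ∀ a b d, ∑ c, p c * T a b c d = p d := by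
  intro a b d
  calc ∑ c, p c * T a b c d = ∑ c, p d * T d a b c := by
        refine Finset.sum_congr rfl fun c _ => ?_
        exact (hrot d a b c).symm
    _ = p d := by rw [← Finset.mul_sum, hTsum, mul_one]
end

section
/- Let S = {0,1} and let T be a positive transition kernel on S. Then T admits an invariant horizontal zigzag product measure (i.e. there exists a strictly positive probability vector p with p(d) = ∑_b p(b) T(a,b,c;d) for all a,c,d) if and only if there exists k ∈ (0,∞) such that T(a,1,c;0) / T(a,0,c;1) = k for all a,c ∈ S. In that case the invariant product measure has p(1) = 1/(1+k) and p(0) = k/(1+k). -/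
lemma hzpm_aux (T : Fin 2 → Fin 2 → Fin 2 → Fin 2 → ℝ)
    (hTpos : ∀ a b c d, 0 < T a b c d)
    (hTsum : ∀ a b c, T a b c 0 + T a b c 1 = 1) :
    ∀ k : ℝ, 0 < k → (∀ a c, T a 1 c 0 / T a 0 c 1 = k) →
      ∀ a c d, (fun i : Fin 2 => if i = 0 then k / (1 + k) else 1 / (1 + k)) d
        = ∑ b, (fun i : Fin 2 => if i = 0 then k / (1 + k) else 1 / (1 + k)) b
            * T a b c d := by
  intro k hk hkeq a c d
  have ht01 : T a 0 c 1 ≠ 0 := (hTpos a 0 c 1).ne'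
  have h10 : T a 1 c 0 = k * T a 0 c 1 := by
    have := hkeq a c
    field_simp at this
    linarith
  have h00 : T a 0 c 0 = 1 - T a 0 c 1 := by have := hTsum a 0 c; linarith
  have h11 : T a 1 c 1 = 1 - k * T a 0 c 1 := by
    have := hTsum a 1 c; linarith
  have hk1 : (1 : ℝ) + k ≠ 0 := by positivity
  fin_cases d <;>
    simp only [Fin.sum_univ_two, Fin.isValue] <;>
    norm_num <;> field_simp <;> nlinarith [h00, h10, h11]

/-- A binary positive PCA kernel admits an invariant HZPM iff the
ratio `T(a,1,c;0)/T(a,0,c;1)` is a constant `k`; in that case the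
invariant marginal is `p(0) = k/(1+k)`, `p(1) = 1/(1+k)`. -/
theorem binary_invariant_hzpm_iff
    (T : Fin 2 → Fin 2 → Fin 2 → Fin 2 → ℝ)
    (hTpos : ∀ a b c d, 0 < T a b c d)
    (hTsum : ∀ a b c, T a b c 0 + T a b c 1 = 1) :
    ((∃ p : Fin 2 → ℝ, (∀ b, 0 < p b) ∧ p 0 + p 1 = 1 ∧
        ∀ a c d, p d = ∑ b, p b * T a b c d) ↔
      (∃ k : ℝ, 0 < k ∧ ∀ a c, T a 1 c 0 / T a 0 c 1 = k)) ∧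
    (∀ k : ℝ, 0 < k → (∀ a c, T a 1 c 0 / T a 0 c 1 = k) →
      ∀ a c d, (fun i : Fin 2 => if i = 0 then k / (1 + k) else 1 / (1 + k)) d
        = ∑ b, (fun i : Fin 2 => if i = 0 then k / (1 + k) else 1 / (1 + k)) b
            * T a b c d) := by
  refine ⟨⟨?_, ?_⟩, hzpm_aux T hTpos hTsum⟩
  · rintro ⟨p, hp, hsum, hinv⟩
    refine ⟨p 0 / p 1, div_pos (hp 0) (hp 1), fun a c => ?_⟩
    have h := hinv a c 0
    simp only [Fin.sum_univ_two] at h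
    have h00 : T a 0 c 0 = 1 - T a 0 c 1 := by have := hTsum a 0 c; linarith
    have key : p 0 * T a 0 c 1 = p 1 * T a 1 c 0 := by
      rw [h00] at h; nlinarith
    have ht01 : T a 0 c 1 ≠ 0 := (hTpos a 0 c 1).ne'
    have hp1 : p 1 ≠ 0 := (hp 1).ne'
    field_simp
    linarith
  · rintro ⟨k, hk, hkeq⟩
    refine ⟨fun i : Fin 2 => if i = 0 then k / (1 + k) else 1 / (1 + k),
      fun b => ?_, ?_, hzpm_aux T hTpos hTsum k hk hkeq⟩
    · fin_cases b <;> simp <;> positivity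
    · have hk1 : (1 : ℝ) + k ≠ 0 := by positivity
      norm_num
      field_simp
      ring
end

section
/- Let S = {0,1}, p a positive probability on S with k = p(0)/p(1), and let T be a positive transition kernel satisfying the three binary conditions: p(0)T(a,0,c;1) = p(1)T(a,1,c;0) for all a,c; p(0)T(a,b,0;1) = p(1)T(a,b,1;0) for all a,b; and p(0)T(0,b,c;1) = p(1)T(1,b,c;0) for all b,c. Then with q_0 = T(0,0,0;0): T(0,0,1;0) = T(0,1,0;0) = T(1,0,0;0) = k(1−q_0); T(0,1,1;0) = T(1,1,0;0) = T(1,0,1;0) = k(1 − k(1−q_0)); and T(1,1,1;0) = k(1 − k(1 − k(1−q_0))). In particular, T is symmetric: T(a,b,c;d) = T(c,b,a;d) for all a,b,c,d. -/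
/-- Binary `{r,r⁻¹}`-quasi-reversible case: all transitions are
determined by `q₀ = T(0,0,0;0)` and `k = p(0)/p(1)`, and the kernel is
symmetric. -/
theorem binary_d4_quasi_reversible_transitions
    (T : Fin 2 → Fin 2 → Fin 2 → Fin 2 → ℝ)
    (hTpos : ∀ a b c d, 0 < T a b c d)
    (hTsum : ∀ a b c, T a b c 0 + T a b c 1 = 1)
    (p : Fin 2 → ℝ) (hp : ∀ b, 0 < p b) (hpsum : p 0 + p 1 = 1)
    (k : ℝ) (hk : k = p 0 / p 1)
    (hcond1 : ∀ a c, p 0 * T a 0 c 1 = p 1 * T a 1 c 0)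
    (hcond2 : ∀ a b, p 0 * T a b 0 1 = p 1 * T a b 1 0)
    (hcond3 : ∀ b c, p 0 * T 0 b c 1 = p 1 * T 1 b c 0) :
    (T 0 0 1 0 = k * (1 - T 0 0 0 0) ∧
     T 0 1 0 0 = k * (1 - T 0 0 0 0) ∧
     T 1 0 0 0 = k * (1 - T 0 0 0 0)) ∧
    (T 0 1 1 0 = k * (1 - k * (1 - T 0 0 0 0)) ∧
     T 1 1 0 0 = k * (1 - k * (1 - T 0 0 0 0)) ∧
     T 1 0 1 0 = k * (1 - k * (1 - T 0 0 0 0))) ∧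
    T 1 1 1 0 = k * (1 - k * (1 - k * (1 - T 0 0 0 0))) ∧
    (∀ a b c d, T a b c d = T c b a d) := by
  have hp1 : p 1 ≠ 0 := ne_of_gt (hp 1)
  have key : ∀ x y : ℝ, p 0 * x = p 1 * y → y = k * x := by
    intro x y h
    rw [hk]
    field_simp
    linarith [h]
  have s000 := hTsum 0 0 0
  have s001 := hTsum 0 0 1
  have s010 := hTsum 0 1 0
  have s100 := hTsum 1 0 0
  have s011 := hTsum 0 1 1
  have s110 := hTsum 1 1 0
  have s101 := hTsum 1 0 1
  have h1 : T 0 0 1 0 = k * (1 - T 0 0 0 0) := by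
    rw [key _ _ (hcond2 0 0), show T 0 0 0 1 = 1 - T 0 0 0 0 by linarith]
  have h2 : T 0 1 0 0 = k * (1 - T 0 0 0 0) := by
    rw [key _ _ (hcond1 0 0), show T 0 0 0 1 = 1 - T 0 0 0 0 by linarith]
  have h3 : T 1 0 0 0 = k * (1 - T 0 0 0 0) := by
    rw [key _ _ (hcond3 0 0), show T 0 0 0 1 = 1 - T 0 0 0 0 by linarith]
  have h4 : T 0 1 1 0 = k * (1 - k * (1 - T 0 0 0 0)) := by
    rw [key _ _ (hcond2 0 1), show T 0 1 0 1 = 1 - T 0 1 0 0 by linarith, h2]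
  have h5 : T 1 1 0 0 = k * (1 - k * (1 - T 0 0 0 0)) := by
    rw [key _ _ (hcond1 1 0), show T 1 0 0 1 = 1 - T 1 0 0 0 by linarith, h3]
  have h6 : T 1 0 1 0 = k * (1 - k * (1 - T 0 0 0 0)) := by
    rw [key _ _ (hcond2 1 0), show T 1 0 0 1 = 1 - T 1 0 0 0 by linarith, h3]
  have h7 : T 1 1 1 0 = k * (1 - k * (1 - k * (1 - T 0 0 0 0))) := by
    rw [key _ _ (hcond2 1 1), show T 1 1 0 1 = 1 - T 1 1 0 0 by linarith, h5]
  refine ⟨⟨h1, h2, h3⟩, ⟨h4, h5, h6⟩, h7, ?_⟩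
  intro a b c d
  fin_cases a <;> fin_cases b <;> fin_cases c <;> fin_cases d <;>
    simp only [Fin.zero_eta, Fin.mk_one] <;>
    linarith [h1, h2, h3, h4, h5, h6, h7, s000, s001, s010, s100, s011, s110, s101]
end

section
/- Let S be a finite set, T a positive transition kernel on S, and p a strictly positive probability vector satisfying p(d) = ∑_b p(b)T(a,b,c;d) for all a,c,d. Fix ℓ, r ∈ S and k ≥ 0, and let P^{(ℓ,r)} be the Markov transition kernel on S^{2k+1} defined by P^{(ℓ,r)}((a_0,b_0,…,b_{k-1},a_k),(a'_0,b'_0,…,b'_{k-1},a'_k)) = T(ℓ,a_0,b_0;a'_0)·T(b_{k-1},a_k,r;a'_k)·∏_{i=1}^{k-1} T(b_{i-1},a_i,b_i;a'_i)·∏_{i=0}^{k-1} T(a'_i,b_i,a'_{i+1};b'_i). Then the product measure π(a_0,b_0,…,a_k) = ∏_i p(a_i) ∏_i p(b_i) on S^{2k+1} satisfies π P^{(ℓ,r)} = π. -/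
/-- The finite-window two-time-step Markov chain induced by a PCA with
memory two satisfying Condition 1, with fixed boundary symbols `l` and
`r`, leaves the product measure `π_p` on `S^{2k+1}` invariant. -/
theorem finite_window_product_invariant
    {S : Type*} [Fintype S] [DecidableEq S]
    (T : S → S → S → S → ℝ)
    (hTpos : ∀ a b c d, 0 < T a b c d)
    (hTsum : ∀ a b c, ∑ d, T a b c d = 1)
    (p : S → ℝ) (hp : ∀ b, 0 < p b) (hpsum : ∑ b, p b = 1)
    (hcond1 : ∀ a c d, p d = ∑ b, p b * T a b c d)
    (l r : S) (k : ℕ) :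
    ∀ (a' : Fin (k + 1) → S) (b' : Fin k → S),
      (∑ a : Fin (k + 1) → S, ∑ b : Fin k → S,
        ((∏ i, p (a i)) * ∏ i, p (b i)) *
          ((∏ i : Fin (k + 1),
              T ((fun j : ℕ => if h : 1 ≤ j ∧ j ≤ k then b ⟨j - 1, by omega⟩
                    else if j = 0 then l else r) i.val)
                (a i)
                ((fun j : ℕ => if h : 1 ≤ j ∧ j ≤ k then b ⟨j - 1, by omega⟩
                    else if j = 0 then l else r) (i.val + 1))
                (a' i)) *
            ∏ i : Fin k, T (a' i.castSucc) (b i) (a' i.succ) (b' i)))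
      = (∏ i, p (a' i)) * ∏ i, p (b' i) := by
  intro a' b'
  -- Key one-step fact, from Condition 1
  have key : ∀ (n : ℕ) (f g : Fin n → S) (q : Fin n → S),
      ∑ x : Fin n → S,
        (∏ i, p (x i)) * ∏ i : Fin n, T (f i) (x i) (g i) (q i)
      = ∏ i, p (q i) := by
    intro n f g q
    have h1 : ∀ x : Fin n → S,
        (∏ i, p (x i)) * ∏ i : Fin n, T (f i) (x i) (g i) (q i)
        = ∏ i : Fin n, p (x i) * T (f i) (x i) (g i) (q i) :=
      fun x => (Finset.prod_mul_distrib).symm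
    simp_rw [h1]
    rw [← Fintype.prod_sum fun i x => p x * T (f i) x (g i) (q i)]
    exact Finset.prod_congr rfl fun i _ => (hcond1 _ _ _).symm
  rw [Finset.sum_comm]
  have main : ∀ b : Fin k → S,
      (∑ a : Fin (k + 1) → S,
        ((∏ i, p (a i)) * ∏ i, p (b i)) *
          ((∏ i : Fin (k + 1),
              T ((fun j : ℕ => if h : 1 ≤ j ∧ j ≤ k then b ⟨j - 1, by omega⟩
                    else if j = 0 then l else r) i.val)
                (a i)
                ((fun j : ℕ => if h : 1 ≤ j ∧ j ≤ k then b ⟨j - 1, by omega⟩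
                    else if j = 0 then l else r) (i.val + 1))
                (a' i)) *
            ∏ i : Fin k, T (a' i.castSucc) (b i) (a' i.succ) (b' i)))
      = ((∏ i, p (b i)) *
          ∏ i : Fin k, T (a' i.castSucc) (b i) (a' i.succ) (b' i)) *
        ∏ i, p (a' i) := by
    intro b
    set c : ℕ → S := fun j : ℕ => if h : 1 ≤ j ∧ j ≤ k then b ⟨j - 1, by omega⟩
                    else if j = 0 then l else r with hc
    set TB : ℝ := ∏ i : Fin k, T (a' i.castSucc) (b i) (a' i.succ) (b' i) with hTB
    have h2 : ∀ a : Fin (k + 1) → S,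
        ((∏ i, p (a i)) * ∏ i, p (b i)) *
          ((∏ i : Fin (k + 1), T (c i.val) (a i) (c (i.val + 1)) (a' i)) * TB)
        = ((∏ i, p (b i)) * TB) *
          ((∏ i, p (a i)) *
            ∏ i : Fin (k + 1), T (c i.val) (a i) (c (i.val + 1)) (a' i)) := by
      intro a; ring
    simp_rw [h2]
    rw [← Finset.mul_sum,
      key (k + 1) (fun i => c i.val) (fun i => c (i.val + 1)) a']
  simp_rw [main]
  rw [← Finset.sum_mul,
    key k (fun i => a' i.castSucc) (fun i => a' i.succ) b', mul_comm]
end
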